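/- Faà di Bruno-type formula with a multiplicative factor: let F(x) = Σ_{n≥0} f_n x^n/n!, G(x) = Σ_{n≥1} g_n x^n/n! (with zero constant term), and H(x) = Σ_{n≥1} h_n x^n/n! be formal power series. Then the n-th coefficient (times n!) of (H'(x))^r · F(G(x)) equals Σ_{k=0}^{n} f_k B^{(r)}_{n+r, k+r}(g_j ; h_j); that is, (H')^r · (F ∘ G) = Σ_{n≥0} (Σ_{k=0}^n f_k B^{(r)}_{n+r,k+r}(g;h)) x^n/n!. -/

import Mathlib

open Finset

/-- The partial `r`-Bell polynomial `B^{(r)}_{n+r,k+r}(a;b)`, defined by the explicit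
formula `(n!/k!) * Σ_{n_1+...+n_{k+r}=n-k} Π_{i=1}^{r} b_{n_i+1}/n_i! *
Π_{i=r+1}^{r+k} a_{n_i+1}/(n_i+1)!`, the sum over `(k+r)`-tuples of naturals. -/
noncomputable def rBell {A : Type*} [CommRing A] [Algebra ℚ A]
    (r k n : ℕ) (a b : ℕ → A) : A :=
  ((n.factorial : ℚ) / (k.factorial : ℚ)) •
    ∑ f ∈ Finset.Nat.antidiagonalTuple (k + r) (n - k),
      ∏ i : Fin (k + r),
        if (i : ℕ) < r then (((f i).factorial : ℚ))⁻¹ • b (f i + 1)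
        else ((((f i) + 1).factorial : ℚ))⁻¹ • a (f i + 1)

/-!
Since `G` has no constant term, `G = X * G₁` with `G₁ = Σ g_{j+1} x^j/(j+1)!`, so the `n`-th
coefficient of `H'^r G^k` is the `(n-k)`-th coefficient of `H'^r G₁^k`. Expanding this product of
`k + r` series coefficientwise gives exactly the sum over `(k+r)`-tuples with sum `n - k` that
defines `B^{(r)}_{n+r,k+r}(g;h)`, up to the factor `n!/k!`.
-/

open PowerSeries

theorem Fin.prod_ite_val_lt {M : Type*} [CommMonoid M] (r k : ℕ) (a b : M) :
    ∏ i : Fin (k + r), (if (i : ℕ) < r then a else b) = a ^ r * b ^ k := by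
  have hcard : #{i : Fin (k + r) | (i : ℕ) < r} = r := by
    rw [Fin.card_filter_val_lt]; omega
  have hcard' : #{i : Fin (k + r) | ¬ (i : ℕ) < r} = k := by
    have := card_filter_add_card_filter_not (s := univ) (fun i : Fin (k + r) => (i : ℕ) < r)
    rw [hcard, card_univ, Fintype.card_fin] at this
    omega
  rw [prod_ite, Finset.prod_const, Finset.prod_const, hcard, hcard']

section

variable {R : Type*} [CommSemiring R]

theorem PowerSeries.coeff_prod_fin {m : ℕ} (P : Fin m → R⟦X⟧) (n : ℕ) :
    coeff n (∏ i, P i) = ∑ t ∈ Nat.antidiagonalTuple m n, ∏ i, coeff (t i) (P i) := by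
  classical
  rw [coeff_prod]
  exact sum_equiv Finsupp.equivFunOnFinite (fun t => by simp [Nat.mem_antidiagonalTuple])
    fun _ _ => rfl

theorem PowerSeries.coeff_pow_mul_pow (P Q : R⟦X⟧) (r k m : ℕ) :
    coeff m (P ^ r * Q ^ k) =
      ∑ u ∈ Nat.antidiagonalTuple (k + r) m,
        ∏ i : Fin (k + r), if (i : ℕ) < r then coeff (u i) P else coeff (u i) Q := by
  simp only [← Fin.prod_ite_val_lt, coeff_prod_fin, apply_ite]

theorem PowerSeries.coeff_pow_mul_X_mul_pow (P Q : R⟦X⟧) (r : ℕ) {k n : ℕ} (hkn : k ≤ n) :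
    coeff n (P ^ r * (X * Q) ^ k) = coeff (n - k) (P ^ r * Q ^ k) := by
  rw [mul_pow, mul_left_comm, coeff_X_pow_mul', if_pos hkn]

theorem PowerSeries.mk_ite_zero_eq_X_mul (c : ℕ → R) :
    (mk fun j => if j = 0 then 0 else c j) = X * mk fun j => c (j + 1) := by
  ext (_ | j) <;> simp [coeff_succ_X_mul]

end

theorem rBell_eq_smul_coeff {A : Type*} [CommRing A] [Algebra ℚ A] (r : ℕ) (g h : ℕ → A)
    {k n : ℕ} (hkn : k ≤ n) :
    rBell r k n g h = ((n.factorial : ℚ) / k.factorial) •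
      coeff n ((mk fun j => ((j.factorial : ℚ))⁻¹ • h (j + 1)) ^ r *
        (mk fun j => if j = 0 then 0 else ((j.factorial : ℚ))⁻¹ • g j) ^ k) := by
  rw [mk_ite_zero_eq_X_mul, coeff_pow_mul_X_mul_pow _ _ _ hkn, coeff_pow_mul_pow, rBell]
  simp only [coeff_mk]

/-- Faà di Bruno-type formula: the `n`-th coefficient of `(H')^r ⋅ F(G(x))` equals
`(1/n!) Σ_{k=0}^{n} f_k B^{(r)}_{n+r,k+r}(g;h)`, where `F = Σ f_n x^n/n!`,
`G = Σ_{n≥1} g_n x^n/n!` and `H = Σ_{n≥1} h_n x^n/n!`. Since `G` has zero constant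
term, the composition `F ∘ G` agrees in degree `n` with `Σ_{k=0}^{n} (f_k/k!) G^k`. -/
theorem faaDiBruno_rBell {A : Type*} [CommRing A] [Algebra ℚ A]
    (r : ℕ) (f g h : ℕ → A) (n : ℕ) :
    PowerSeries.coeff n
        ((PowerSeries.mk fun j => ((j.factorial : ℚ))⁻¹ • h (j + 1)) ^ r *
          ∑ k ∈ Finset.range (n + 1),
            ((k.factorial : ℚ))⁻¹ •
              (PowerSeries.C (f k) *
                (PowerSeries.mk fun j =>
                  if j = 0 then 0 else ((j.factorial : ℚ))⁻¹ • g j) ^ k)) =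
      ((n.factorial : ℚ))⁻¹ • ∑ k ∈ Finset.range (n + 1), f k * rBell r k n g h := by
  rw [mul_sum, map_sum, smul_sum]
  refine sum_congr rfl fun k hk => ?_
  rw [rBell_eq_smul_coeff r g h (mem_range_succ_iff.mp hk), mul_smul_comm, coeff_smul,
    mul_left_comm, coeff_C_mul, mul_smul_comm, smul_smul]
  congr 1
  field_simp
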